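/- Let p be a prime, G a finitely generated group, and α ∈ Aut_p(G). Suppose there is a homomorphism ψ: G → K with K a finite p-group and g ∈ G such that ψ(g) is not conjugate to ψ(α(g)) in K. Then there is a homomorphism φ: Out_p(G) → L to a finite p-group L with φ(α̂) ≠ 1, where α̂ is the image of α in Out_p(G). -/

import Mathlib

variable (p : ℕ) (H : Type*) [Group H]

/-- The verbal subgroup `K_p = [H,H]Hᵖ` generated by all commutators and all `p`-th
powers; the quotient `H/K_p` is the first mod-`p` homology of `H`. -/
def Kp : Subgroup H := commutator H ⊔ Subgroup.closure {x : H | ∃ g : H, g ^ p = x}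

lemma Kp_map_le (α : MulAut H) : (Kp p H).map α.toMonoidHom ≤ Kp p H := by
  rw [Kp, Subgroup.map_sup]
  apply sup_le
  · refine le_trans (Subgroup.characteristic_iff_map_le.mp inferInstance α) le_sup_left
  · rw [MonoidHom.map_closure]
    refine le_trans (Subgroup.closure_mono ?_) le_sup_right
    rintro x ⟨y, ⟨g, hg⟩, rfl⟩
    exact ⟨α g, by rw [← map_pow]; exact congrArg _ hg⟩

/-- The subgroup `Aut_p(H) ≤ Aut(H)` of automorphisms acting trivially on
`H / [H,H]Hᵖ`. -/
def AutP : Subgroup (MulAut H) where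
  carrier := {α : MulAut H | ∀ h : H, h⁻¹ * α h ∈ Kp p H}
  one_mem' := by intro h; simpa using (Kp p H).one_mem
  mul_mem' := by
    intro α β hα hβ h
    have h1 : (h⁻¹ * α h) * (α (h⁻¹ * β h)) ∈ Kp p H := by
      refine mul_mem (hα h) (Kp_map_le p H α ⟨_, hβ h, rfl⟩)
    simpa [map_mul, mul_assoc] using h1
  inv_mem' := by
    intro α hα h
    have h1 := hα (α⁻¹ h)
    have h2 : ((α⁻¹ h)⁻¹ * h)⁻¹ ∈ Kp p H := by
      refine inv_mem ?_
      simpa using h1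
    simpa [mul_inv_rev] using h2

/-!
Let `N` be the intersection of the kernels of the finitely many homomorphisms `G → K`. It is
characteristic and contained in `ker ψ`, and `G ⧸ N` is a finite `p`-group, so every automorphism
in `Aut_p(G)` induces one in `Aut_p(G ⧸ N)`, inner ones inducing inner ones. If the image of `α`
in `Out_p(G ⧸ N)` were trivial, `α` would act on `G ⧸ N` as conjugation by some `y`, and then
`ψ (α g) = ψ (y * g * y⁻¹)`. It remains to see that `Out_p(Q)` is a `p`-group for a finite
`p`-group `Q` (Hall): an element of `Aut_p(Q)` of prime order `q ≠ p` has a fixed point in each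
coset of `[Q,Q]Qᵖ`, these cosets having `p`-power size, so its fixed subgroup together with the
Frattini subgroup `Φ(Q) ⊇ [Q,Q]Qᵖ` generates `Q`, hence is `Q`.
-/

open scoped Pointwise

section Kp

variable {p}

lemma map_Kp_le {G G' : Type*} [Group G] [Group G'] (f : G →* G') :
    (Kp p G).map f ≤ Kp p G' := by
  rw [Kp, Kp, Subgroup.map_sup, _root_.commutator, _root_.commutator, Subgroup.map_commutator,
    MonoidHom.map_closure]
  refine sup_le_sup (Subgroup.commutator_mono le_top le_top) (Subgroup.closure_mono ?_)
  rintro _ ⟨_, ⟨g, rfl⟩, rfl⟩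
  exact ⟨f g, (map_pow f g p).symm⟩

lemma Kp_le_of_card_quotient_eq [Fact p.Prime] {Q : Type*} [Group Q] (M : Subgroup Q) [M.Normal]
    (hM : Nat.card (Q ⧸ M) = p) : Kp p Q ≤ M := by
  have : IsCyclic (Q ⧸ M) := isCyclic_of_prime_card hM
  rw [← QuotientGroup.ker_mk' M, Kp]
  refine sup_le ?_ ((Subgroup.closure_le _).mpr ?_)
  · rw [_root_.commutator_def, Subgroup.commutator_le]
    intro g₁ _ g₂ _
    rw [MonoidHom.mem_ker, map_commutatorElement, commutatorElement_eq_one_iff_mul_comm]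
    exact Std.Commutative.comm _ _
  · rintro _ ⟨g, rfl⟩
    rw [SetLike.mem_coe, MonoidHom.mem_ker, map_pow, ← hM]
    exact pow_card_eq_one'

variable [Fact p.Prime] {Q : Type*} [Group Q] [Finite Q]

lemma IsPGroup.card_quotient_eq_of_isCoatom (hQ : IsPGroup p Q) {M : Subgroup Q} [M.Normal]
    (hM : IsCoatom M) : Nat.card (Q ⧸ M) = p := by
  -- `{H // M ≤ H}` and `Set.Ici M` agree up to defeq
  have : IsSimpleOrder (Subgroup (Q ⧸ M)) :=
    ((QuotientGroup.comapMk'OrderIso M).trans (OrderIso.refl (Set.Ici M))).isSimpleOrder_iff.mpr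
      (Set.isSimpleOrder_Ici_iff_isCoatom.mpr hM)
  have : Nontrivial (Q ⧸ M) := Subgroup.nontrivial_iff.mp inferInstance
  have hp_dvd : p ∣ Nat.card (Q ⧸ M) :=
    (hQ.to_quotient M).card_eq_or_dvd.resolve_left Finite.one_lt_card.ne'
  obtain ⟨x, hx⟩ := exists_prime_orderOf_dvd_card' p hp_dvd
  have hx_ne : x ≠ 1 := by
    rintro rfl
    exact (Fact.out : p.Prime).one_lt.ne' (hx ▸ orderOf_one)
  have hx_gen : Subgroup.zpowers x = ⊤ :=
    (IsSimpleOrder.eq_bot_or_eq_top _).resolve_left (Subgroup.zpowers_ne_bot.mpr hx_ne)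
  rw [← Subgroup.card_top, ← hx_gen, Nat.card_zpowers, hx]

lemma IsPGroup.Kp_le_frattini (hQ : IsPGroup p Q) : Kp p Q ≤ frattini Q := by
  refine le_iInf₂ fun M hM => ?_
  have := hQ.isNilpotent
  have : M.Normal :=
    Subgroup.NormalizerCondition.normal_of_coatom M Group.normalizerCondition_of_isNilpotent hM
  exact Kp_le_of_card_quotient_eq M (hQ.card_quotient_eq_of_isCoatom hM)

end Kp

section Hall

variable {p} [Fact p.Prime] {Q : Type*} [Group Q] [Finite Q]

lemma AutP.exists_fixed_mem_leftCoset (hQ : IsPGroup p Q) {γ : MulAut Q} (hγ : γ ∈ AutP p Q)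
    {q : ℕ} [Fact q.Prime] (hqp : q ≠ p) (hγq : γ ^ q = 1) (x : Q) :
    ∃ y ∈ x • (Kp p Q : Set Q), γ y = y := by
  let coset : SubMulAction (Subgroup.zpowers γ) Q :=
    { carrier := x • (Kp p Q : Set Q)
      smul_mem' := fun c y hy => by
        rw [mem_leftCoset_iff] at hy ⊢
        simpa [mul_assoc, Subgroup.smul_def, MulAut.smul_def] using
          mul_mem hy (Subgroup.zpowers_le.mpr hγ c.2 y) }
  have hA : IsPGroup q (Subgroup.zpowers γ) := IsPGroup.of_card_dvd_pow (n := 1) <| by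
    rw [Nat.card_zpowers, pow_one]
    exact orderOf_dvd_of_pow_eq_one hγq
  obtain ⟨t, ht⟩ := IsPGroup.iff_card.mp (hQ.to_subgroup (Kp p Q))
  have hq_not_dvd : ¬ q ∣ Nat.card coset := by
    change ¬ q ∣ Nat.card ↥(x • (Kp p Q : Set Q))
    rw [Set.natCard_smul_set, SetLike.coe_sort_coe, ht]
    exact fun hdvd => hqp <| (Nat.prime_dvd_prime_iff_eq Fact.out Fact.out).mp
      ((Fact.out : q.Prime).dvd_of_dvd_pow hdvd)
  obtain ⟨⟨y, hy⟩, hfix⟩ := hA.nonempty_fixed_point_of_prime_not_dvd_card coset hq_not_dvd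
  exact ⟨y, hy, congrArg Subtype.val (hfix ⟨γ, Subgroup.mem_zpowers γ⟩)⟩

lemma AutP.eq_one_of_pow_prime_eq_one (hQ : IsPGroup p Q) {γ : MulAut Q} (hγ : γ ∈ AutP p Q)
    {q : ℕ} [Fact q.Prime] (hqp : q ≠ p) (hγq : γ ^ q = 1) : γ = 1 := by
  let fixedSubgroup := (γ : Q →* Q).eqLocus (MonoidHom.id Q)
  have hsup : fixedSubgroup ⊔ frattini Q = ⊤ := by
    refine eq_top_iff.mpr fun x _ => ?_
    obtain ⟨y, hy, hfix⟩ := exists_fixed_mem_leftCoset hQ hγ hqp hγq x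
    rw [mem_leftCoset_iff] at hy
    have hx : x = y * (x⁻¹ * y)⁻¹ := by group
    rw [hx]
    exact mul_mem (Subgroup.mem_sup_left hfix)
      (Subgroup.mem_sup_right (inv_mem (hQ.Kp_le_frattini hy)))
  have htop := frattini_nongenerating hsup
  ext x
  exact (Subgroup.eq_top_iff' _).mp htop x

theorem IsPGroup.autP (hQ : IsPGroup p Q) : IsPGroup p (AutP p Q) := by
  have : Finite (MulAut Q) := .of_injective _ DFunLike.coe_injective
  refine IsPGroup.of_card (Nat.eq_prime_pow_of_unique_prime_dvd Nat.card_pos.ne' ?_)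
  intro q hq hq_dvd
  have : Fact q.Prime := ⟨hq⟩
  by_contra hqp
  obtain ⟨β, hβ⟩ := exists_prime_orderOf_dvd_card' q hq_dvd
  have hβ_pow : (β : MulAut Q) ^ q = 1 := by
    rw [← Subgroup.coe_pow, ← hβ, pow_orderOf_eq_one]
    rfl
  have hβ_one : β = 1 := Subtype.ext (AutP.eq_one_of_pow_prime_eq_one hQ β.2 hqp hβ_pow)
  exact hq.one_lt.ne' (hβ ▸ hβ_one ▸ orderOf_one)

end Hall

section Quotient

variable {G : Type*} [Group G] (N : Subgroup G) [N.Characteristic]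

def MulAut.quotient : MulAut G →* MulAut (G ⧸ N) where
  toFun e := QuotientGroup.congr N N e (Subgroup.characteristic_iff_map_eq.mp inferInstance e)
  map_one' := by
    ext x
    induction x using QuotientGroup.induction_on
    rfl
  map_mul' e f := by
    ext x
    induction x using QuotientGroup.induction_on
    rfl

@[simp]
lemma MulAut.quotient_apply_mk (e : MulAut G) (x : G) :
    MulAut.quotient N e (x : G ⧸ N) = (e x : G ⧸ N) :=
  rfl

lemma MulAut.quotient_conj (x : G) :
    MulAut.quotient N (MulAut.conj x) = MulAut.conj (x : G ⧸ N) := by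
  ext y
  induction y using QuotientGroup.induction_on
  rfl

variable {p}

lemma MulAut.quotient_mem_autP {e : MulAut G} (he : e ∈ AutP p G) :
    MulAut.quotient N e ∈ AutP p (G ⧸ N) := by
  intro x
  induction x using QuotientGroup.induction_on with
  | H z => exact map_Kp_le (QuotientGroup.mk' N) ⟨z⁻¹ * e z, he z, rfl⟩

variable (p)

def AutP.quotient : AutP p G →* AutP p (G ⧸ N) :=
  ((MulAut.quotient N).comp (AutP p G).subtype).codRestrict _
    fun e => MulAut.quotient_mem_autP N e.2

end Quotient

def InnP : Subgroup (AutP p H) := (MulAut.conj : H →* MulAut H).range.subgroupOf (AutP p H)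

instance : (InnP p H).Normal := by
  refine Subgroup.Normal.subgroupOf ⟨?_⟩ _
  rintro _ ⟨y, rfl⟩ β
  exact ⟨β y, by ext; simp [MulAut.conj_apply]⟩

abbrev OutP := AutP p H ⧸ InnP p H

lemma isConj_of_quotient_eq_conj {G K : Type*} [Group G] [Group K] {N : Subgroup G}
    [N.Characteristic] {ψ : G →* K} (hN : N ≤ ψ.ker) {α : MulAut G} {y : G}
    (hα : MulAut.quotient N α = MulAut.conj (y : G ⧸ N)) (g : G) :
    IsConj (ψ g) (ψ (α g)) := by
  have hmk : ((α g : G) : G ⧸ N) = ((y * g * y⁻¹ : G) : G ⧸ N) := by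
    rw [← MulAut.quotient_apply_mk, hα]
    rfl
  have hψ : ψ (α g) = ψ (y * g * y⁻¹) := by
    rw [← inv_mul_eq_one, ← map_inv, ← map_mul]
    exact hN (QuotientGroup.eq.mp hmk)
  rw [hψ, map_mul, map_mul, map_inv]
  exact isConj_iff.mpr ⟨ψ y, rfl⟩

lemma Group.FG.finite_monoidHom {G K : Type*} [Group G] [Group K] [Finite K] (hfg : Group.FG G) :
    Finite (G →* K) := by
  obtain ⟨S, hS, hS_fin⟩ := Group.fg_iff.mp hfg
  have := hS_fin.to_subtype
  exact .of_injective (fun f (s : S) => f s) fun f₁ f₂ hf =>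
    MonoidHom.eq_of_eqOn_dense hS fun x hx => congrFun hf ⟨x, hx⟩

section

variable {p}

lemma Group.FG.exists_characteristic_le_ker [Fact p.Prime] {G K : Type*} [Group G] [Group K]
    [Finite K] (hfg : Group.FG G) (hK : IsPGroup p K) (ψ : G →* K) :
    ∃ (N : Subgroup G) (_ : N.Characteristic),
      N ≤ ψ.ker ∧ Finite (G ⧸ N) ∧ IsPGroup p (G ⧸ N) := by
  have := hfg.finite_monoidHom (K := K)
  let Φ : G →* ((G →* K) → K) := MonoidHom.pi fun f => f
  have hΦ : IsPGroup p ((G →* K) → K) := by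
    obtain ⟨n, hn⟩ := hK.exists_card_eq
    exact .of_card (n := n * Nat.card (G →* K)) (by rw [Nat.card_fun, hn, pow_mul])
  refine ⟨Φ.ker, Subgroup.characteristic_iff_le_comap.mpr fun e x hx => ?_, fun x hx => ?_,
    .of_injective _ (QuotientGroup.kerLift_injective Φ),
    hΦ.of_injective _ (QuotientGroup.kerLift_injective Φ)⟩
  · funext f
    exact congrFun hx (f.comp e.toMonoidHom)
  · exact congrFun hx ψ

end

-- A homomorphism `Out_p(G) → L` is encoded as a homomorphism `Aut_p(G) → L` killing the inner
-- automorphisms.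
/-- The pro-`p` analogue of Grossman's criterion. Let `p` be a prime, `G` a finitely
generated group, and `α ∈ Aut_p(G)`. If there are a homomorphism `ψ : G → K` to a finite
`p`-group `K` and `g ∈ G` such that `ψ(g)` is not conjugate to `ψ(α(g))` in `K`, then
there is a homomorphism `φ : Out_p(G) → L` to a finite `p`-group `L` with `φ(α̂) ≠ 1`,
i.e. a homomorphism `Aut_p(G) → L` killing all inner automorphisms and not killing
`α`. -/
theorem stmt18 {G : Type*} [Group G] (hp : p.Prime) (hfg : Group.FG G)
    (α : MulAut G) (hα : α ∈ AutP p G)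
    (K : Type*) [Group K] [Finite K] (hK : IsPGroup p K) (ψ : G →* K) (g : G)
    (h : ¬ IsConj (ψ g) (ψ (α g))) :
    ∃ (L : Type) (_ : Group L) (_ : Finite L), IsPGroup p L ∧
      ∃ φ : AutP p G →* L,
        (∀ (x : G) (hx : MulAut.conj x ∈ AutP p G), φ ⟨MulAut.conj x, hx⟩ = 1) ∧
        φ ⟨α, hα⟩ ≠ 1 := by
  have : Fact p.Prime := ⟨hp⟩
  obtain ⟨N, _, hN, _, hQ⟩ := hfg.exists_characteristic_le_ker hK ψ
  let toOutP : AutP p G →* OutP p (G ⧸ N) := (QuotientGroup.mk' _).comp (AutP.quotient p N)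
  let e : Shrink.{0} (OutP p (G ⧸ N)) ≃* OutP p (G ⧸ N) := Shrink.mulEquiv
  have hφ_eq_one (β : AutP p G) :
      e.symm (toOutP β) = 1 ↔ MulAut.quotient N β ∈ (MulAut.conj : G ⧸ N →* _).range := by
    rw [map_eq_one_iff _ e.symm.injective]
    exact QuotientGroup.eq_one_iff _
  refine ⟨_, inferInstance, inferInstance, (hQ.autP.to_quotient _).of_equiv e.symm,
    e.symm.toMonoidHom.comp toOutP, fun x hx => ?_, fun hα_one => h ?_⟩
  · exact (hφ_eq_one _).mpr ⟨x, (MulAut.quotient_conj N x).symm⟩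
  · obtain ⟨y, hy⟩ := (hφ_eq_one _).mp hα_one
    obtain ⟨y, rfl⟩ := QuotientGroup.mk_surjective y
    exact isConj_of_quotient_eq_conj hN hy.symm g
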